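/- arXiv:2412.13748 — 5 statements merged into one kernel-verified Lean document; each statement's English description precedes it below -/
import Mathlib

section
/- With g = ‖h‖² > 0, γ > 0, and μ = -1/g + 1/(g√(1+γg)), the matrix Q = I + μ h hᴴ satisfies Q (I + γ h hᴴ) Q = I. -/
/-! Since `P = h hᴴ` satisfies `P² = g P`, the matrices `1 + a P` form a monoid on which
`1 + a P ↦ 1 + a g` is multiplicative. So `Q (1 + γ P) Q = 1 + κ P` with
`1 + κ g = (1 + μ g)² (1 + γ g)`, and `μ` is chosen exactly so that `1 + μ g = 1 / √(1 + γ g)`,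
which forces `κ = 0`. -/

open Matrix

theorem one_add_smul_mul_one_add_smul {R A : Type*} [CommRing R] [Ring A] [Algebra R A]
    {P : A} {c : R} (hP : P * P = c • P) (a b : R) :
    (1 + a • P) * (1 + b • P) = 1 + (a + b + a * b * c) • P := by
  simp only [mul_add, add_mul, one_mul, mul_one, smul_mul_smul_comm, hP, smul_smul]
  module

theorem one_add_smul_mul_one_add_smul_mul_one_add_smul_eq_one {K A : Type*} [Field K] [Ring A]
    [Algebra K A] {P : A} {c : K} (hP : P * P = c • P) (hc : c ≠ 0) {a b : K}
    (hab : (1 + a * c) ^ 2 * (1 + b * c) = 1) :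
    (1 + a • P) * (1 + b • P) * (1 + a • P) = 1 := by
  rw [one_add_smul_mul_one_add_smul hP, one_add_smul_mul_one_add_smul hP]
  have hcoeff : a + b + a * b * c + a + (a + b + a * b * c) * a * c = 0 :=
    mul_right_cancel₀ hc (by linear_combination hab)
  rw [hcoeff, zero_smul, add_zero]

theorem Matrix.vecMulVec_star_mul_self {n 𝕜 : Type*} [Fintype n] [RCLike 𝕜] (h : n → 𝕜) :
    vecMulVec h (star h) * vecMulVec h (star h)
      = ((∑ i, ‖h i‖ ^ 2 : ℝ) : 𝕜) • vecMulVec h (star h) := by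
  rw [vecMulVec_mul_vecMulVec, vecMulVec_smul]
  congr 1
  simp [dotProduct, RCLike.conj_mul]

theorem sum_norm_sq_pos {n E : Type*} [Fintype n] [NormedAddCommGroup E] {h : n → E}
    (hne : h ≠ 0) : 0 < ∑ i, ‖h i‖ ^ 2 := by
  obtain ⟨i, hi⟩ := Function.ne_iff.mp hne
  exact Finset.sum_pos' (fun j _ => by positivity) ⟨i, Finset.mem_univ i, by positivity⟩

theorem one_add_mul_sq_mul_one_add_mul_eq_one {g γ : ℝ} (hg : g ≠ 0) (hγg : 0 < 1 + γ * g) :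
    (1 + (-1 / g + 1 / (g * √(1 + γ * g))) * g) ^ 2 * (1 + γ * g) = 1 := by
  have hsqrt : √(1 + γ * g) ≠ 0 := (Real.sqrt_pos.mpr hγg).ne'
  have : 1 + (-1 / g + 1 / (g * √(1 + γ * g))) * g = 1 / √(1 + γ * g) := by
    field_simp
    ring
  rw [this, div_pow, one_pow, Real.sq_sqrt hγg.le, one_div_mul_cancel hγg.ne']

theorem stmt_2 (n : ℕ) (h : Fin n → ℂ) (g γ μ : ℝ)
    (hne : h ≠ 0)
    (hg : g = ∑ i, ‖h i‖^2) (hγ : 0 < γ)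
    (hμ : μ = -1/g + 1/(g * Real.sqrt (1 + γ*g))) :
    let Q : Matrix (Fin n) (Fin n) ℂ :=
      1 + (μ : ℂ) • Matrix.vecMulVec h (star h)
    Q * (1 + (γ : ℂ) • Matrix.vecMulVec h (star h)) * Q = 1 := by
  have hg_pos : 0 < g := hg ▸ sum_norm_sq_pos hne
  have hμγ : (1 + μ * g) ^ 2 * (1 + γ * g) = 1 :=
    hμ ▸ one_add_mul_sq_mul_one_add_mul_eq_one hg_pos.ne' (by positivity)
  have hP : vecMulVec h (star h) * vecMulVec h (star h) = (g : ℂ) • vecMulVec h (star h) :=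
    hg ▸ vecMulVec_star_mul_self h
  exact one_add_smul_mul_one_add_smul_mul_one_add_smul_eq_one hP
    (Complex.ofReal_ne_zero.mpr hg_pos.ne') (by exact_mod_cast hμγ)
end

section
/- Let h_b, h_e ∈ ℂⁿ be linearly independent vectors, γ_b, γ_e > 0, and λ > 0. The nonzero eigenvalues of the Hermitian rank-2 matrix M = γ_b h_b h_bᴴ - λ γ_e h_e h_eᴴ are the two roots ξ of ξ² - (γ_b g_b - λ γ_e g_e) ξ - λ γ_b γ_e g_b g_e (1 - ρ̄) = 0, where g_b = ‖h_b‖², g_e = ‖h_e‖², ρ = ⟨h_e, h_b⟩, and ρ̄ = |ρ|²/(g_b g_e). -/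
/-!
Write `M = U W` with `U = [h_b h_e]` an `n × 2` matrix and `W` the `2 × n` matrix with rows
`γ_b h_bᴴ` and `-λ γ_e h_eᴴ`. The identity `X² χ_{UW} = Xⁿ χ_{WU}` of characteristic polynomials
shows that `M` and the `2 × 2` matrix `W U` have the same nonzero eigenvalues. The entries of `W U`
are Gram entries, so its trace is `γ_b g_b - λ γ_e g_e` and its determinant is
`-λ γ_b γ_e (g_b g_e - |ρ|²)`; its characteristic polynomial is the stated quadratic.
-/

open scoped InnerProductSpace
open Matrix ComplexConjugate

namespace Matrix

variable {m n : Type*}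

section
open Polynomial

theorem isRoot_charpoly_mul_comm [Fintype m] [Fintype n] [DecidableEq m] [DecidableEq n]
    {R : Type*} [CommRing R] [IsDomain R]
    (A : Matrix m n R) (B : Matrix n m R) {ξ : R} (hξ : ξ ≠ 0) :
    (A * B).charpoly.IsRoot ξ ↔ (B * A).charpoly.IsRoot ξ := by
  have h := congrArg (eval ξ) (charpoly_mul_comm' A B)
  simp only [eval_mul, eval_pow, eval_X] at h
  rw [IsRoot.def, IsRoot.def, ← mul_right_inj' (pow_ne_zero (Fintype.card n) hξ), h,
    mul_zero, mul_eq_zero, or_iff_right (pow_ne_zero _ hξ)]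

theorem exists_mulVec_eq_smul_iff_isRoot_charpoly [Fintype n] [DecidableEq n]
    {K : Type*} [Field K] (M : Matrix n n K) (ξ : K) :
    (∃ v, v ≠ 0 ∧ M *ᵥ v = ξ • v) ↔ M.charpoly.IsRoot ξ := by
  rw [IsRoot.def, eval_charpoly, ← exists_mulVec_eq_zero_iff]
  simp [sub_mulVec, sub_eq_zero, eq_comm]

end

theorem vecMulVec_add_vecMulVec {R : Type*} [CommSemiring R] (u v x y : n → R) :
    vecMulVec u x + vecMulVec v y = (of ![u, v])ᵀ * of ![x, y] := by
  ext i j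
  simp [mul_apply, Fin.sum_univ_two, vecMulVec_apply]

theorem of_mul_transpose_of_fin_two [Fintype n] {R : Type*} [CommSemiring R]
    (u v x y : n → R) :
    of ![x, y] * (of ![u, v])ᵀ = !![x ⬝ᵥ u, x ⬝ᵥ v; y ⬝ᵥ u, y ⬝ᵥ v] := by
  ext i j
  fin_cases i <;> fin_cases j <;> rfl

theorem exists_mulVec_vecMulVec_add_vecMulVec_eq_smul_iff [Fintype n] [DecidableEq n]
    {K : Type*} [Field K] (u v x y : n → K) {ξ : K} (hξ : ξ ≠ 0) :
    (∃ w, w ≠ 0 ∧ (vecMulVec u x + vecMulVec v y) *ᵥ w = ξ • w) ↔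
      ξ ^ 2 - (x ⬝ᵥ u + y ⬝ᵥ v) * ξ + (x ⬝ᵥ u * (y ⬝ᵥ v) - x ⬝ᵥ v * (y ⬝ᵥ u)) = 0 := by
  rw [exists_mulVec_eq_smul_iff_isRoot_charpoly, vecMulVec_add_vecMulVec,
    isRoot_charpoly_mul_comm _ _ hξ, of_mul_transpose_of_fin_two, charpoly_fin_two]
  simp [trace_fin_two_of, det_fin_two_of]

end Matrix

theorem EuclideanSpace.star_dotProduct_eq_inner {𝕜 ι : Type*} [RCLike 𝕜] [Fintype ι]
    (x y : EuclideanSpace 𝕜 ι) : star x.ofLp ⬝ᵥ y.ofLp = ⟪x, y⟫_𝕜 := by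
  rw [dotProduct_comm]
  rfl

/-- By Cauchy–Schwarz the quotient is only junk (`_ / 0 = 0`) when the numerator vanishes too. -/
theorem norm_sq_mul_norm_sq_mul_norm_inner_sq_div {𝕜 E : Type*} [RCLike 𝕜]
    [SeminormedAddCommGroup E] [InnerProductSpace 𝕜 E] (x y : E) :
    ‖x‖ ^ 2 * ‖y‖ ^ 2 * (‖⟪y, x⟫_𝕜‖ ^ 2 / (‖x‖ ^ 2 * ‖y‖ ^ 2)) = ‖⟪y, x⟫_𝕜‖ ^ 2 := by
  refine mul_div_cancel_of_imp' fun h => le_antisymm ?_ (sq_nonneg _)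
  calc ‖⟪y, x⟫_𝕜‖ ^ 2 ≤ (‖y‖ * ‖x‖) ^ 2 := by gcongr; exact norm_inner_le_norm y x
    _ = ‖x‖ ^ 2 * ‖y‖ ^ 2 := by ring
    _ = 0 := h

theorem stmt_5_general (n : ℕ)
    (hb he : EuclideanSpace ℂ (Fin n))
    (γb γe lam : ℝ) :
    let gb := ‖hb‖^2
    let ge := ‖he‖^2
    let ρ : ℂ := ⟪he, hb⟫_ℂ
    let ρbar := ‖ρ‖^2 / (gb * ge)
    let M : Matrix (Fin n) (Fin n) ℂ :=
      (γb : ℂ) • Matrix.vecMulVec hb (star hb)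
        - ((lam * γe : ℝ) : ℂ) • Matrix.vecMulVec he (star he)
    ∀ ξ : ℝ, ξ ≠ 0 →
      ((∃ v : Fin n → ℂ, v ≠ 0 ∧ M.mulVec v = (ξ : ℂ) • v) ↔
        ξ^2 - (γb*gb - lam*γe*ge)*ξ - lam*γb*γe*gb*ge*(1-ρbar) = 0) := by
  intro gb ge ρ ρbar M ξ hξ
  have hM : M = vecMulVec hb.ofLp ((γb : ℂ) • star hb.ofLp)
      + vecMulVec he.ofLp (-((lam * γe : ℝ) : ℂ) • star he.ofLp) := by
    simp only [M, vecMulVec_smul, vecMulVec_neg, neg_smul, sub_eq_add_neg]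
  have hgb : star hb.ofLp ⬝ᵥ hb.ofLp = (gb : ℂ) := by
    rw [EuclideanSpace.star_dotProduct_eq_inner, inner_self_eq_norm_sq_to_K]; norm_cast
  have hge : star he.ofLp ⬝ᵥ he.ofLp = (ge : ℂ) := by
    rw [EuclideanSpace.star_dotProduct_eq_inner, inner_self_eq_norm_sq_to_K]; norm_cast
  have hρ : star he.ofLp ⬝ᵥ hb.ofLp = ρ := EuclideanSpace.star_dotProduct_eq_inner he hb
  have hρconj : star hb.ofLp ⬝ᵥ he.ofLp = conj ρ := by
    rw [EuclideanSpace.star_dotProduct_eq_inner, inner_conj_symm]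
  have hconj : conj ρ * ρ = ((gb * ge * ρbar : ℝ) : ℂ) := by
    rw [norm_sq_mul_norm_sq_mul_norm_inner_sq_div, Complex.conj_mul']; norm_cast
  rw [hM, exists_mulVec_vecMulVec_add_vecMulVec_eq_smul_iff _ _ _ _ (Complex.ofReal_ne_zero.2 hξ),
    ← Complex.ofReal_eq_zero]
  simp only [smul_dotProduct, smul_eq_mul, hgb, hge, hρ, hρconj]
  push_cast at hconj ⊢
  constructor <;> intro h
  · linear_combination h - γb * lam * γe * hconj
  · linear_combination h + γb * lam * γe * hconj

theorem stmt_5 (n : ℕ) (hn : 2 ≤ n)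
    (hb he : EuclideanSpace ℂ (Fin n))
    (hli : LinearIndependent ℂ ![hb, he])
    (γb γe lam : ℝ) (hγb : 0 < γb) (hγe : 0 < γe) (hlam : 0 < lam) :
    let gb := ‖hb‖^2
    let ge := ‖he‖^2
    let ρ : ℂ := ⟪he, hb⟫_ℂ
    let ρbar := ‖ρ‖^2 / (gb * ge)
    let M : Matrix (Fin n) (Fin n) ℂ :=
      (γb : ℂ) • Matrix.vecMulVec hb (star hb)
        - ((lam * γe : ℝ) : ℂ) • Matrix.vecMulVec he (star he)
    ∀ ξ : ℝ, ξ ≠ 0 →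
      ((∃ v : Fin n → ℂ, v ≠ 0 ∧ M.mulVec v = (ξ : ℂ) • v) ↔
        ξ^2 - (γb*gb - lam*γe*ge)*ξ - lam*γb*γe*gb*ge*(1-ρbar) = 0) :=
  stmt_5_general n hb he γb γe lam
end

section
/- As γ_b, γ_e → ∞ with γ_b = c_b P, γ_e = c_e P, P → ∞ (fixed c_b, c_e, g_b, g_e > 0, ρ̄ ∈ [0,1)), the maximum secrecy rate R*(P) = log₂(1 + c_b P g_b (1 + c_e P g_e (1-ρ̄))/(1 + c_e P g_e)) satisfies R*(P) - log₂(c_b P g_b (1-ρ̄)) → 0. -/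
/-! The argument of the first logarithm is `1 + cb P gb q(P)` with
`q(P) = (1 + ce P ge (1 - ρ)) / (1 + ce P ge) → 1 - ρ`, so its ratio to `cb P gb (1 - ρ)`
tends to `1`, and the difference of the logarithms is the logarithm of that ratio. -/

open Filter Topology

theorem tendsto_logb_sub_logb_of_tendsto_div {α : Type*} {l : Filter α} {f g : α → ℝ} (b : ℝ)
    (h : Tendsto (fun x => f x / g x) l (𝓝 1)) :
    Tendsto (fun x => Real.logb b (f x) - Real.logb b (g x)) l (𝓝 0) := by
  have hlogb : Tendsto (fun x => Real.logb b (f x / g x)) l (𝓝 0) := by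
    simpa only [Real.logb_one, Function.comp_def] using
      (Real.continuousAt_logb one_ne_zero).tendsto.comp h
  refine hlogb.congr' ?_
  filter_upwards [h.eventually_ne one_ne_zero] with x hx
  obtain ⟨hf, hg⟩ := div_ne_zero_iff.mp hx
  exact Real.logb_div hf hg

theorem tendsto_one_add_mul_div_one_add {c : ℝ} (hc : 0 < c) (s : ℝ) :
    Tendsto (fun x : ℝ => (1 + c * x * s) / (1 + c * x)) atTop (𝓝 s) := by
  have hden : Tendsto (fun x : ℝ => 1 + c * x) atTop atTop :=
    tendsto_atTop_add_const_left _ 1 (tendsto_id.const_mul_atTop hc)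
  have hlim : Tendsto (fun x : ℝ => s + (1 - s) * (1 + c * x)⁻¹) atTop (𝓝 s) := by
    simpa using (hden.inv_tendsto_atTop.const_mul (1 - s)).const_add s
  refine hlim.congr' ?_
  filter_upwards [eventually_ge_atTop 0] with x hx
  have : 1 + c * x ≠ 0 := by positivity
  field_simp
  ring

theorem tendsto_one_add_mul_div_mul {a c s : ℝ} (ha : 0 < a) (hc : 0 < c) (hs : 0 < s) :
    Tendsto (fun x : ℝ => (1 + a * x * ((1 + c * x * s) / (1 + c * x))) / (a * x * s))
      atTop (𝓝 1) := by
  have hinv : Tendsto (fun x : ℝ => (a * s * x)⁻¹) atTop (𝓝 0) :=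
    (tendsto_id.const_mul_atTop (mul_pos ha hs)).inv_tendsto_atTop
  have hlim : Tendsto (fun x : ℝ => (a * s * x)⁻¹ + (1 + c * x * s) / (1 + c * x) / s)
      atTop (𝓝 1) := by
    simpa [hs.ne'] using hinv.add ((tendsto_one_add_mul_div_one_add hc s).div_const s)
  refine hlim.congr' ?_
  filter_upwards [eventually_gt_atTop 0] with x hx
  field_simp

theorem stmt_12_general (cb ce gb ge ρ : ℝ)
    (hcb : 0 < cb) (hce : 0 < ce) (hgb : 0 < gb) (hge : 0 < ge)
    (hρ1 : ρ < 1) :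
    Tendsto (fun P : ℝ =>
        Real.logb 2 (1 + cb*P*gb*(1 + ce*P*ge*(1-ρ))/(1 + ce*P*ge))
          - Real.logb 2 (cb*P*gb*(1-ρ)))
      atTop (nhds 0) := by
  refine tendsto_logb_sub_logb_of_tendsto_div 2 ?_
  convert tendsto_one_add_mul_div_mul (mul_pos hcb hgb) (mul_pos hce hge) (sub_pos.mpr hρ1)
    using 2 with P
  ring

theorem stmt_12 (cb ce gb ge ρ : ℝ)
    (hcb : 0 < cb) (hce : 0 < ce) (hgb : 0 < gb) (hge : 0 < ge)
    (hρ0 : 0 ≤ ρ) (hρ1 : ρ < 1) :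
    Tendsto (fun P : ℝ =>
        Real.logb 2 (1 + cb*P*gb*(1 + ce*P*ge*(1-ρ))/(1 + ce*P*ge))
          - Real.logb 2 (cb*P*gb*(1-ρ)))
      atTop (nhds 0) :=
  stmt_12_general cb ce gb ge ρ hcb hce hgb hge hρ1
end

section
/- Let α = a g_b - 2^R c g_e and β = 2^(R+2) a c g_b g_e (1-ρ̄) with a, c, g_b, g_e > 0, R > 0, ρ̄ ∈ (0,1), and assume a g_b > 2^R c g_e ρ̄. Then (α + √(α²+β))/2 > a g_b - 2^R c g_e ρ̄ > 0; equivalently P_mrt = (2^R - 1)/(a g_b - 2^R c g_e ρ̄) > P* = 2(2^R - 1)/(α + √(α²+β)). -/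
theorem stmt_14 (a c gb ge R ρ : ℝ)
    (ha : 0 < a) (hc : 0 < c) (hgb : 0 < gb) (hge : 0 < ge)
    (hR : 0 < R) (hρ0 : 0 < ρ) (hρ1 : ρ < 1)
    (hmrt : a*gb - 2^R*c*ge*ρ > 0) :
    let α := a*gb - 2^R*c*ge
    let β := 2^(R+2)*a*c*gb*ge*(1-ρ)
    ((α + Real.sqrt (α^2 + β))/2 > a*gb - 2^R*c*ge*ρ) ∧
    ((2^R - 1)/(a*gb - 2^R*c*ge*ρ) > 2*(2^R - 1)/(α + Real.sqrt (α^2 + β))) := by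
  intro α β
  have hαdef : α = a*gb - 2^R*c*ge := rfl
  have hβdef : β = 2^(R+2)*a*c*gb*ge*(1-ρ) := rfl
  clear_value α β
  have h2R : (0:ℝ) < 2^R := Real.rpow_pos_of_pos two_pos R
  have h2R2 : (2:ℝ)^(R+2) = 4 * 2^R := by
    rw [Real.rpow_add two_pos]
    norm_num
    ring
  have hβ' : β = 4 * (a*gb) * (2^R*c*ge*(1-ρ)) := by rw [hβdef, h2R2]; ring
  have hρ' : 0 < 1 - ρ := by linarith
  have hβpos : 0 < β := by rw [hβ']; positivity
  have hnn : 0 ≤ α^2 + β := by positivity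
  have hs0 : 0 ≤ Real.sqrt (α^2 + β) := Real.sqrt_nonneg _
  have hssq : (Real.sqrt (α^2 + β))^2 = α^2 + β := Real.sq_sqrt hnn
  set s := Real.sqrt (α^2 + β) with hs
  set D := a*gb - 2^R*c*ge*ρ with hD
  have hp1 : 0 < a*gb - D := by
    rw [hD]
    have : 0 < 2^R*c*ge*ρ := by positivity
    linarith
  have hp2 : D - α = 2^R*c*ge*(1-ρ) := by rw [hD, hαdef]; ring
  have hp2' : 0 < D - α := by rw [hp2]; positivity
  have hβ'' : β = 4*(a*gb)*(D - α) := by rw [hp2]; exact hβ'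
  have hid : α^2 + β - (2*D-α)^2 = 4*(a*gb - D)*(D - α) := by rw [hβ'']; ring
  have hkey : (2*D - α)^2 < α^2 + β := by nlinarith [mul_pos hp1 hp2']
  have hsgt : 2*D - α < s := by
    nlinarith [hssq, hs0, hkey, sq_nonneg (s - (2*D - α))]
  have hfirst : (α + s)/2 > D := by linarith
  refine ⟨hfirst, ?_⟩
  have h1lt : (1:ℝ) < 2^R :=
    (Real.one_lt_rpow_iff_of_pos two_pos).mpr (Or.inl ⟨one_lt_two, hR⟩)
  have hαs : 0 < α + s := by linarith
  rw [gt_iff_lt, div_lt_div_iff₀ hαs hmrt]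
  nlinarith [hsgt, h1lt, hmrt]
end

section
/- Let D = a h_b h_bᴴ - b h_e h_eᴴ be a Hermitian matrix on ℂⁿ with a, b > 0 and h_b, h_e linearly independent. Then the largest eigenvalue of D equals (α + √(α² + 4ab g_b g_e (1-ρ̄)))/2, where α = a g_b - b g_e, g_b = ‖h_b‖², g_e = ‖h_e‖², ρ̄ = |⟨h_e,h_b⟩|²/(g_b g_e), and this eigenvalue is strictly positive. -/
open scoped InnerProductSpace
open InnerProductSpace Module.End RCLike

/-!
The operator `T z = a⟪x, z⟫x - b⟪y, z⟫y` maps into `span {x, y}`. Pairing an eigen-equation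
`T v = μ v` with `x` and `y` gives a 2 × 2 linear system in `⟪x, v⟫, ⟪y, v⟫`, so every nonzero
eigenvalue is a root of `μ² = (a‖x‖² - b‖y‖²) μ + a b (‖x‖²‖y‖² - ‖⟪y, x⟫‖²)`. The constant term is
positive by the strict Cauchy–Schwarz inequality, hence the larger root `λ` is positive and bounds
every eigenvalue; as a maximiser of `⟪T u, u⟫` on the unit sphere is an eigenvector, `λ` bounds the
Rayleigh quotient. Conversely `(λ + b‖y‖²) x - b⟪y, x⟫ y` is an eigenvector for `λ`, so the bound
is attained.
-/

theorem le_of_sq_eq_mul_add {α c μ : ℝ} (h : μ ^ 2 = α * μ + c) :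
    μ ≤ (α + √(α ^ 2 + 4 * c)) / 2 := by
  have : |2 * μ - α| ≤ √(α ^ 2 + 4 * c) := Real.abs_le_sqrt (by linear_combination 4 * h)
  linarith [le_abs_self (2 * μ - α)]

theorem sq_eq_mul_add_of_nonneg {α c : ℝ} (h : 0 ≤ α ^ 2 + 4 * c) :
    ((α + √(α ^ 2 + 4 * c)) / 2) ^ 2 = α * ((α + √(α ^ 2 + 4 * c)) / 2) + c := by
  linear_combination Real.sq_sqrt h / 4

theorem add_sqrt_div_two_pos {α c : ℝ} (hc : 0 < c) : 0 < (α + √(α ^ 2 + 4 * c)) / 2 := by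
  have : |α| < √(α ^ 2 + 4 * c) := by
    rw [← Real.sqrt_sq_eq_abs]
    exact Real.sqrt_lt_sqrt (sq_nonneg _) (by linarith)
  linarith [neg_abs_le α]

section

variable {𝕜 E : Type*} [RCLike 𝕜] [NormedAddCommGroup E] [InnerProductSpace 𝕜 E]

theorem inner_mul_inner_symm_eq_norm_sq (x y : E) :
    ⟪x, y⟫_𝕜 * ⟪y, x⟫_𝕜 = (‖⟪y, x⟫_𝕜‖ : 𝕜) ^ 2 := by
  rw [← inner_conj_symm, RCLike.conj_mul]

theorem LinearIndependent.norm_inner_lt_norm_mul_norm {x y : E}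
    (h : LinearIndependent 𝕜 ![x, y]) :
    ‖⟪x, y⟫_𝕜‖ < ‖x‖ * ‖y‖ := by
  refine (norm_inner_le_norm x y).lt_of_ne fun heq ↦ ?_
  rcases (norm_inner_eq_norm_tfae 𝕜 x y).out 0 2 |>.mp heq with hx | ⟨r, hy⟩
  · exact h.ne_zero 0 hx
  · simpa using (LinearIndependent.pair_iff.mp h r (-1) (by simp [hy])).2

theorem Module.End.HasEigenvalue.exists_norm_eq_one_inner_apply_eq {T : E →ₗ[𝕜] E} {μ : 𝕜}
    (hμ : HasEigenvalue T μ) :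
    ∃ u : E, ‖u‖ = 1 ∧ ⟪u, T u⟫_𝕜 = μ := by
  obtain ⟨v, hv⟩ := hμ.exists_hasEigenvector
  have hv0 : ‖v‖ ≠ 0 := norm_ne_zero_iff.mpr hv.2
  refine ⟨(‖v‖⁻¹ : 𝕜) • v, by simp [norm_smul, hv0], ?_⟩
  rw [map_smul, hv.apply_eq_smul, inner_smul_left, inner_smul_right, inner_smul_right,
    inner_self_eq_norm_sq_to_K]
  simp only [map_inv₀, conj_ofReal]
  field_simp [ofReal_ne_zero.mpr hv0]

theorem LinearMap.IsSymmetric.re_inner_le_of_forall_hasEigenvalue_le [FiniteDimensional 𝕜 E]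
    {T : E →ₗ[𝕜] E} (hT : T.IsSymmetric) {c : ℝ} (hc : ∀ μ : ℝ, HasEigenvalue T μ → μ ≤ c)
    {u : E} (hu : ‖u‖ = 1) : re ⟪T u, u⟫_𝕜 ≤ c := by
  have := FiniteDimensional.proper_rclike 𝕜 E
  have := FiniteDimensional.complete 𝕜 E
  set T' := (hT.toSelfAdjoint : E →L[𝕜] E)
  obtain ⟨x₀, hx₀, hmax⟩ := (isCompact_sphere (0 : E) 1).exists_isMaxOn ⟨u, by simpa using hu⟩
    T'.reApplyInnerSelf_continuous.continuousOn
  have hx₀1 : ‖x₀‖ = 1 := by simpa using hx₀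
  have heig : T x₀ = (T'.rayleighQuotient x₀ : 𝕜) • x₀ :=
    hT.toSelfAdjoint.2.eq_smul_self_of_isLocalExtrOn (by rw [hx₀1]; exact .inr hmax.localize)
  have hμ := hc _ (hasEigenvalue_of_hasEigenvector ⟨mem_eigenspace_iff.mpr heig,
    norm_ne_zero_iff.mp (by simp [hx₀1])⟩)
  calc re ⟪T u, u⟫_𝕜 = T'.reApplyInnerSelf u := rfl
    _ ≤ T'.reApplyInnerSelf x₀ := hmax (by simpa using hu)
    _ = T'.rayleighQuotient x₀ := by simp [ContinuousLinearMap.rayleighQuotient, hx₀1]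
    _ ≤ c := hμ

variable (𝕜) in
noncomputable def rankOneDiff (a b : ℝ) (x y : E) : E →L[𝕜] E :=
  (a : 𝕜) • rankOne 𝕜 x x - (b : 𝕜) • rankOne 𝕜 y y

variable {a b : ℝ} {x y : E}

@[simp]
theorem rankOneDiff_apply (z : E) :
    rankOneDiff 𝕜 a b x y z = ((a : 𝕜) * ⟪x, z⟫_𝕜) • x - ((b : 𝕜) * ⟪y, z⟫_𝕜) • y := by
  simp [rankOneDiff, mul_smul]

theorem isSymmetric_rankOneDiff : (rankOneDiff 𝕜 a b x y : E →ₗ[𝕜] E).IsSymmetric :=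
  ((isSymmetric_rankOne_self x).smul (conj_ofReal a)).sub
    ((isSymmetric_rankOne_self y).smul (conj_ofReal b))

theorem eq_zero_or_sq_eq_of_hasEigenvalue_rankOneDiff {μ : ℝ}
    (hμ : HasEigenvalue (rankOneDiff 𝕜 a b x y : E →ₗ[𝕜] E) μ) :
    μ = 0 ∨ μ ^ 2 = (a * ‖x‖ ^ 2 - b * ‖y‖ ^ 2) * μ
      + a * b * (‖x‖ ^ 2 * ‖y‖ ^ 2 - ‖⟪y, x⟫_𝕜‖ ^ 2) := by
  obtain ⟨v, hv⟩ := hμ.exists_hasEigenvector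
  have hTv : ((a : 𝕜) * ⟪x, v⟫_𝕜) • x - ((b : 𝕜) * ⟪y, v⟫_𝕜) • y = (μ : 𝕜) • v := by
    simpa using hv.apply_eq_smul
  have hx := congrArg (inner 𝕜 x) hTv
  have hy := congrArg (inner 𝕜 y) hTv
  simp only [inner_sub_right, inner_smul_right, inner_self_eq_norm_sq_to_K] at hx hy
  have hK := inner_mul_inner_symm_eq_norm_sq (𝕜 := 𝕜) x y
  set χ : ℝ := μ ^ 2 - (a * ‖x‖ ^ 2 - b * ‖y‖ ^ 2) * μ
      - a * b * (‖x‖ ^ 2 * ‖y‖ ^ 2 - ‖⟪y, x⟫_𝕜‖ ^ 2)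
  -- `χ` is the characteristic polynomial of the 2 × 2 system `hx, hy` in `⟪x, v⟫, ⟪y, v⟫`, so it
  -- kills both; since `μ • v` is the combination of `x, y` with these coefficients, `μ χ v = 0`.
  have hχx : (χ : 𝕜) * ⟪x, v⟫_𝕜 = 0 := by
    push_cast [χ]
    linear_combination (-((b : 𝕜) * ‖y‖ ^ 2 + μ)) * hx + (b * ⟪x, y⟫_𝕜) * hy
      - (a * b * ⟪x, v⟫_𝕜) * hK
  have hχy : (χ : 𝕜) * ⟪y, v⟫_𝕜 = 0 := by
    push_cast [χ]
    linear_combination ((a : 𝕜) * ‖x‖ ^ 2 - μ) * hy - (a * ⟪y, x⟫_𝕜) * hx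
      - (a * b * ⟪y, v⟫_𝕜) * hK
  have hμχ : ((μ * χ : ℝ) : 𝕜) • v = 0 := by
    rw [ofReal_mul, mul_comm, mul_smul, ← hTv, smul_sub, smul_smul, smul_smul,
      mul_left_comm _ (a : 𝕜), mul_left_comm _ (b : 𝕜), hχx, hχy]
    simp
  have hμχ' : μ * χ = 0 := ofReal_eq_zero.mp ((smul_eq_zero.mp hμχ).resolve_right hv.2)
  exact (mul_eq_zero.mp hμχ').imp_right fun hχ ↦ by linear_combination hχ

theorem hasEigenvalue_rankOneDiff (hxy : LinearIndependent 𝕜 ![x, y]) {μ : ℝ}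
    (hμ : μ ^ 2 = (a * ‖x‖ ^ 2 - b * ‖y‖ ^ 2) * μ
      + a * b * (‖x‖ ^ 2 * ‖y‖ ^ 2 - ‖⟪y, x⟫_𝕜‖ ^ 2))
    (hμb : μ + b * ‖y‖ ^ 2 ≠ 0) :
    HasEigenvalue (rankOneDiff 𝕜 a b x y : E →ₗ[𝕜] E) μ := by
  set P : 𝕜 := ((μ + b * ‖y‖ ^ 2 : ℝ) : 𝕜)
  set v : E := P • x - ((b : 𝕜) * ⟪y, x⟫_𝕜) • y
  have hv : v ≠ 0 := fun h ↦ hμb <| by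
    have := (LinearIndependent.pair_iff.mp hxy P (-((b : 𝕜) * ⟪y, x⟫_𝕜))
      (by rw [neg_smul, ← sub_eq_add_neg]; exact h)).1
    exact ofReal_eq_zero.mp this
  have hK := inner_mul_inner_symm_eq_norm_sq (𝕜 := 𝕜) x y
  have hμ' : (μ : 𝕜) ^ 2 = (a * ‖x‖ ^ 2 - b * ‖y‖ ^ 2) * μ
      + a * b * (‖x‖ ^ 2 * ‖y‖ ^ 2 - ‖⟪y, x⟫_𝕜‖ ^ 2) := by exact_mod_cast hμ
  have hx : (a : 𝕜) * ⟪x, v⟫_𝕜 = μ * P := by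
    simp only [v, P, inner_sub_right, inner_smul_right, inner_self_eq_norm_sq_to_K]
    push_cast
    linear_combination -hμ' - (a * b) * hK
  have hy : (b : 𝕜) * ⟪y, v⟫_𝕜 = μ * (b * ⟪y, x⟫_𝕜) := by
    simp only [v, P, inner_sub_right, inner_smul_right, inner_self_eq_norm_sq_to_K]
    push_cast
    ring
  refine hasEigenvalue_of_hasEigenvector ⟨mem_eigenspace_iff.mpr ?_, hv⟩
  rw [ContinuousLinearMap.coe_coe, rankOneDiff_apply, hx, hy, smul_sub, smul_smul, smul_smul]

end

theorem toLp_sub_vecMulVec_mulVec {𝕜 ι : Type*} [RCLike 𝕜] [Fintype ι] (a b : ℝ)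
    (x y u : EuclideanSpace 𝕜 ι) :
    WithLp.toLp 2 (((a : 𝕜) • Matrix.vecMulVec x (star x)
      - (b : 𝕜) • Matrix.vecMulVec y (star y)).mulVec u) = rankOneDiff 𝕜 a b x y u := by
  rw [Matrix.sub_mulVec, Matrix.smul_mulVec, Matrix.smul_mulVec]
  ext i
  simp [Matrix.vecMulVec_mulVec, dotProduct, PiLp.inner_apply, real_smul_eq_coe_mul, mul_comm,
    mul_left_comm]

theorem stmt_16_general (n : ℕ)
    (hb he : EuclideanSpace ℂ (Fin n))
    (hli : LinearIndependent ℂ ![hb, he])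
    (a b : ℝ) (ha : 0 < a) (hbpos : 0 < b) :
    let gb := ‖hb‖^2
    let ge := ‖he‖^2
    let ρbar := ‖(⟪he, hb⟫_ℂ : ℂ)‖^2 / (gb * ge)
    let α := a*gb - b*ge
    let D : Matrix (Fin n) (Fin n) ℂ :=
      (a : ℂ) • Matrix.vecMulVec hb (star hb) - (b : ℂ) • Matrix.vecMulVec he (star he)
    IsGreatest
      {r : ℝ | ∃ u : EuclideanSpace ℂ (Fin n), ‖u‖ = 1 ∧
        (r : ℂ) = ⟪u, (WithLp.toLp 2 (D.mulVec u) : EuclideanSpace ℂ (Fin n))⟫_ℂ}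
      ((α + Real.sqrt (α^2 + 4*a*b*gb*ge*(1-ρbar)))/2) ∧
    0 < (α + Real.sqrt (α^2 + 4*a*b*gb*ge*(1-ρbar)))/2 := by
  intro gb ge ρbar α D
  have hD (u : EuclideanSpace ℂ (Fin n)) :
      WithLp.toLp 2 (D.mulVec u) = rankOneDiff ℂ a b hb he u :=
    toLp_sub_vecMulVec_mulVec a b hb he u
  have hgap : ‖⟪he, hb⟫_ℂ‖ ^ 2 < gb * ge := by
    rw [norm_inner_symm]
    simpa only [mul_pow] using
      pow_lt_pow_left₀ hli.norm_inner_lt_norm_mul_norm (norm_nonneg _) two_ne_zero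
  set c := a * b * (gb * ge - ‖⟪he, hb⟫_ℂ‖ ^ 2)
  have hc : 0 < c := by have := sub_pos.mpr hgap; positivity
  have hdisc : α ^ 2 + 4 * a * b * gb * ge * (1 - ρbar) = α ^ 2 + 4 * c := by
    have hprod : gb * ge ≠ 0 := (hgap.trans_le' (by positivity)).ne'
    have hgb : gb ≠ 0 := left_ne_zero_of_mul hprod
    have hge : ge ≠ 0 := right_ne_zero_of_mul hprod
    simp only [ρbar, c]
    field_simp
  rw [hdisc]
  have hroot := sq_eq_mul_add_of_nonneg (α := α) (c := c) (by positivity)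
  refine ⟨⟨?_, ?_⟩, add_sqrt_div_two_pos hc⟩
  · obtain ⟨u, hu, hTu⟩ := (hasEigenvalue_rankOneDiff hli hroot
      (by have := add_sqrt_div_two_pos (α := α) hc; positivity)).exists_norm_eq_one_inner_apply_eq
    exact ⟨u, hu, by rw [hD]; exact hTu.symm⟩
  · rintro r ⟨u, hu, hr⟩
    rw [hD] at hr
    have hre : r = re ⟪rankOneDiff ℂ a b hb he u, u⟫_ℂ := by
      rw [inner_re_symm, ← hr]; simp
    rw [hre]
    refine isSymmetric_rankOneDiff.re_inner_le_of_forall_hasEigenvalue_le (fun μ hμ ↦ ?_) hu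
    rcases eq_zero_or_sq_eq_of_hasEigenvalue_rankOneDiff hμ with rfl | hμ
    · exact (add_sqrt_div_two_pos hc).le
    · exact le_of_sq_eq_mul_add hμ

theorem stmt_16 (n : ℕ) (hn : 2 ≤ n)
    (hb he : EuclideanSpace ℂ (Fin n))
    (hli : LinearIndependent ℂ ![hb, he])
    (a b : ℝ) (ha : 0 < a) (hbpos : 0 < b) :
    let gb := ‖hb‖^2
    let ge := ‖he‖^2
    let ρbar := ‖(⟪he, hb⟫_ℂ : ℂ)‖^2 / (gb * ge)
    let α := a*gb - b*ge
    let D : Matrix (Fin n) (Fin n) ℂ :=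
      (a : ℂ) • Matrix.vecMulVec hb (star hb) - (b : ℂ) • Matrix.vecMulVec he (star he)
    IsGreatest
      {r : ℝ | ∃ u : EuclideanSpace ℂ (Fin n), ‖u‖ = 1 ∧
        (r : ℂ) = ⟪u, (WithLp.toLp 2 (D.mulVec u) : EuclideanSpace ℂ (Fin n))⟫_ℂ}
      ((α + Real.sqrt (α^2 + 4*a*b*gb*ge*(1-ρbar)))/2) ∧
    0 < (α + Real.sqrt (α^2 + 4*a*b*gb*ge*(1-ρbar)))/2 :=
  stmt_16_general n hb he hli a b ha hbpos
end
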